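/- For u ≥ 1, |B_{2u}| = |V⁰_{2u}| + 2·|Ṽ⁺_{2u}| - 2u + 1, where V⁰_{2u} is the set of lists of nonzero integers with absolute values summing to 2u and sum 0, and Ṽ⁺_{2u} is the set of lists of positive integers with at least two entries, each entry different from u, summing to 2u. B_{2u} is the set of lists of nonzero residues modulo 2u summing to 0 in ℤ/2u that are congruent entrywise to -ν for some list ν of nonzero integers with Σ|νᵢ| = 2u. -/

import Mathlib

/-- B_{2u} : lists of nonzero residues modulo 2u summing to 0 in ℤ/2u whose
entries are congruent to -νᵢ for some list ν of nonzero integers with Σ|νᵢ| = 2u. -/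
def Bset (κ : ℕ) : Set (List (ZMod κ)) :=
  {b | (∀ x ∈ b, x ≠ 0) ∧ b.sum = 0 ∧
    ∃ ν : List ℤ, (∀ x ∈ ν, x ≠ 0) ∧ (ν.map (fun x => |x|)).sum = (κ : ℤ) ∧
      List.Forall₂ (fun (bi : ZMod κ) (νi : ℤ) => bi = -(νi : ZMod κ)) b ν}

/-- V⁰_κ : lists of nonzero integers with absolute values summing to κ and sum 0. -/
def V0 (κ : ℕ) : Set (List ℤ) :=
  {ν | (∀ x ∈ ν, x ≠ 0) ∧ (ν.map (fun x => |x|)).sum = (κ : ℤ) ∧ ν.sum = 0}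

/-- Ṽ⁺_{2u} : lists of positive integers with at least two entries, each entry
different from u, summing to 2u. -/
def Vtilde (u : ℕ) : Set (List ℤ) :=
  {ν | (∀ x ∈ ν, 0 < x) ∧ (∀ x ∈ ν, x ≠ (u : ℤ)) ∧ 2 ≤ ν.length ∧
    ν.sum = 2 * (u : ℤ)}

/-!
Each element of `B_{2u}` is the residue list of an admissible `ν`: nonzero entries with
`Σ |νᵢ| = 2u`, at least two of them, and `Σ νᵢ ∈ {0, ±2u}`. Two admissible lists with the same
residues differ only where an entry `x` is replaced by `x ∓ 2u`, and each such position carries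
mass `|x| + |x ∓ 2u| = 2u` of the total `4u` of the pair. So for length at least three they differ
in at most one position, where the entries are `u` and `-u`. Keeping one list per class — the
sum-zero lists of length at least three, the positive lists avoiding `u`, the negatives of those
of length at least three, and `[u, u]` — counts
`(|V⁰| - 2) + |Ṽ⁺| + (|Ṽ⁺| - (2u - 2)) + 1`.
-/

theorem Int.abs_add_abs_eq_of_modEq {κ x y : ℤ} (h : x ≡ y [ZMOD κ]) (hx : |x| < κ)
    (hy : |y| < κ) (hne : x ≠ y) : |x| + |y| = κ := by
  have hd : κ ∣ x - y := h.symm.dvd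
  rw [abs_lt] at hx hy
  rcases (sub_ne_zero.2 hne).lt_or_gt with hlt | hgt
  · have := Int.eq_zero_of_abs_lt_dvd (dvd_add hd dvd_rfl) (abs_lt.2 ⟨by linarith, by linarith⟩)
    rw [abs_of_neg (by linarith), abs_of_pos (by linarith)]
    linarith
  · have := Int.eq_zero_of_abs_lt_dvd (dvd_sub hd dvd_rfl) (abs_lt.2 ⟨by linarith, by linarith⟩)
    rw [abs_of_pos (by linarith), abs_of_neg (by linarith)]
    linarith

theorem List.Forall₂.exists_append_cons_of_ne {α : Type*} {R : α → α → Prop} {l₁ l₂ : List α}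
    (h : Forall₂ R l₁ l₂) (hne : l₁ ≠ l₂) :
    ∃ p a b s t, l₁ = p ++ a :: s ∧ l₂ = p ++ b :: t ∧ R a b ∧ a ≠ b ∧ Forall₂ R s t := by
  induction h with
  | nil => exact absurd rfl hne
  | @cons a b s t hab hst ih =>
    by_cases hab' : a = b
    · subst hab'
      obtain ⟨p, c, d, s', t', rfl, rfl, hcd, hne', hst'⟩ := ih fun h => hne (h ▸ rfl)
      exact ⟨a :: p, c, d, s', t', rfl, rfl, hcd, hne', hst'⟩
    · exact ⟨[], a, b, s, t, rfl, rfl, hab, hab', hst⟩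

theorem List.eq_of_forall₂_modEq {κ : ℤ} {l₁ l₂ : List ℤ} (h : Forall₂ (· ≡ · [ZMOD κ]) l₁ l₂)
    (h₁ : ∀ x ∈ l₁, 0 ≤ x ∧ x < κ) (h₂ : ∀ y ∈ l₂, 0 ≤ y ∧ y < κ) : l₁ = l₂ := by
  induction h with
  | nil => rfl
  | @cons a b s t hab _ ih =>
    simp only [mem_cons, forall_eq_or_imp] at h₁ h₂
    rw [ih h₁.2 h₂.2, ← Int.emod_eq_of_lt h₁.1.1 h₁.1.2, ← Int.emod_eq_of_lt h₂.1.1 h₂.1.2]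
    exact congrArg (· :: t) hab

namespace Bset

open List

def absSum (l : List ℤ) : ℤ := (l.map fun x => |x|).sum

@[simp] lemma absSum_nil : absSum [] = 0 := rfl

@[simp] lemma absSum_cons (x : ℤ) (l : List ℤ) : absSum (x :: l) = |x| + absSum l := by
  simp [absSum]

@[simp] lemma absSum_append (l₁ l₂ : List ℤ) : absSum (l₁ ++ l₂) = absSum l₁ + absSum l₂ := by
  simp [absSum]

@[simp] lemma absSum_map_neg (l : List ℤ) : absSum (l.map Neg.neg) = absSum l := by
  simp [absSum, Function.comp_def]

lemma absSum_eq_sum {l : List ℤ} (h : ∀ x ∈ l, 0 < x) : absSum l = l.sum := by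
  induction l with
  | nil => rfl
  | cons x l ih =>
    simp only [mem_cons, forall_eq_or_imp] at h
    simp [abs_of_pos h.1, ih h.2]

lemma sum_le_absSum (l : List ℤ) : l.sum ≤ absSum l := by
  induction l with
  | nil => rfl
  | cons x l ih => simp only [sum_cons, absSum_cons]; linarith [le_abs_self x]

lemma abs_sum_le_absSum (l : List ℤ) : |l.sum| ≤ absSum l := by
  have h := sum_le_absSum (l.map Neg.neg)
  rw [absSum_map_neg, ← List.sum_neg] at h
  exact abs_le.2 ⟨by linarith, sum_le_absSum l⟩

lemma length_le_absSum {l : List ℤ} (h : ∀ x ∈ l, x ≠ 0) : (l.length : ℤ) ≤ absSum l := by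
  induction l with
  | nil => simp
  | cons x l ih =>
    simp only [mem_cons, forall_eq_or_imp] at h
    simp only [length_cons, Nat.cast_succ, absSum_cons]
    linarith [ih h.2, Int.one_le_abs h.1]

lemma abs_add_length_le_absSum {l : List ℤ} (h : ∀ y ∈ l, y ≠ 0) {x : ℤ} (hx : x ∈ l) :
    |x| + l.length ≤ absSum l + 1 := by
  obtain ⟨p, s, rfl⟩ := append_of_mem hx
  have hp := length_le_absSum (l := p) fun y hy => h y (by simp [hy])
  have hs := length_le_absSum (l := s) fun y hy => h y (by simp [hy])
  simp only [length_append, length_cons, absSum_append, absSum_cons]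
  push_cast
  linarith

lemma pos_of_absSum_eq_sum {l : List ℤ} (h0 : ∀ x ∈ l, x ≠ 0) (h : absSum l = l.sum) :
    ∀ x ∈ l, 0 < x := by
  induction l with
  | nil => simp
  | cons x l ih =>
    simp only [mem_cons, forall_eq_or_imp, absSum_cons, sum_cons] at h0 h ⊢
    have hx := le_abs_self x
    have hl := sum_le_absSum l
    exact ⟨lt_of_le_of_ne (by rw [← abs_eq_self]; linarith) h0.1.symm, ih h0.2 (by linarith)⟩

def signedCompositions (κ : ℕ) : Set (List ℤ) := {ν | (∀ x ∈ ν, x ≠ 0) ∧ absSum ν = κ}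

lemma abs_lt_of_mem_signedCompositions {κ : ℕ} {ν : List ℤ} (hν : ν ∈ signedCompositions κ)
    (hlen : 2 ≤ ν.length) {x : ℤ} (hx : x ∈ ν) : |x| < κ := by
  have := abs_add_length_le_absSum hν.1 hx
  rw [hν.2] at this
  omega

theorem finite_signedCompositions (κ : ℕ) : (signedCompositions κ).Finite := by
  have := (Set.finite_Icc (-(κ : ℤ)) κ).to_subtype
  refine ((List.finite_length_le (Set.Icc (-(κ : ℤ)) κ) κ).image (map Subtype.val)).subset ?_
  intro ν hν
  have hbound (x) (hx : x ∈ ν) := abs_add_length_le_absSum hν.1 hx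
  have hlen := length_le_absSum hν.1
  rw [hν.2] at hbound hlen
  have hmem (x) (hx : x ∈ ν) : x ∈ Set.Icc (-(κ : ℤ)) κ := by
    have := hbound x hx
    have := length_pos_of_mem hx
    exact abs_le.1 (by omega)
  exact ⟨ν.pmap Subtype.mk hmem, by simpa using hlen, by simp [map_pmap]⟩

theorem eq_or_flip_of_forall₂_modEq {κ : ℕ} {ν μ : List ℤ} (hν : ν ∈ signedCompositions κ)
    (hμ : μ ∈ signedCompositions κ) (hlen : 3 ≤ ν.length) (h : Forall₂ (· ≡ · [ZMOD κ]) ν μ) :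
    ν = μ ∨ ∃ p s x, 2 * |x| = (κ : ℤ) ∧ ν = p ++ x :: s ∧ μ = p ++ -x :: s := by
  have hlen' : 3 ≤ μ.length := h.length_eq ▸ hlen
  have hνκ (x) (hx : x ∈ ν) := abs_lt_of_mem_signedCompositions hν (by omega) hx
  have hμκ (x) (hx : x ∈ μ) := abs_lt_of_mem_signedCompositions hμ (by omega) hx
  by_cases heq : ν = μ
  · exact .inl heq
  obtain ⟨p, x, y, s, t, rfl, rfl, hxy, hne, hst⟩ := h.exists_append_cons_of_ne heq
  have hmass := Int.abs_add_abs_eq_of_modEq hxy (hνκ x (by simp)) (hμκ y (by simp)) hne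
  obtain ⟨hν0, hνs⟩ := hν
  obtain ⟨hμ0, hμs⟩ := hμ
  simp only [absSum_append, absSum_cons] at hνs hμs
  by_cases hst' : s = t
  · subst hst'
    have hyx : y = -x := by
      rcases abs_cases x with ⟨hx, _⟩ | ⟨hx, _⟩ <;> rcases abs_cases y with ⟨hy, _⟩ | ⟨hy, _⟩ <;>
        omega
    exact .inr ⟨p, s, x, by omega, rfl, by rw [hyx]⟩
  -- a second difference would use up the whole mass `2 κ`, leaving room for two entries only
  exfalso
  obtain ⟨q, a, b, s', t', rfl, rfl, hab, hne', -⟩ := hst.exists_append_cons_of_ne hst'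
  have hmass' := Int.abs_add_abs_eq_of_modEq hab (hνκ a (by simp)) (hμκ b (by simp)) hne'
  have hp := length_le_absSum (l := p) fun z hz => hν0 z (by simp [hz])
  have hq := length_le_absSum (l := q) fun z hz => hν0 z (by simp [hz])
  have hs := length_le_absSum (l := s') fun z hz => hν0 z (by simp [hz])
  have ht := length_le_absSum (l := t') fun z hz => hμ0 z (by simp [hz])
  simp only [absSum_append, absSum_cons, length_append, length_cons] at hνs hμs hlen
  omega

def negResidues (κ : ℕ) (ν : List ℤ) : List (ZMod κ) := ν.map fun x : ℤ => -(x : ZMod κ)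

lemma forall₂_iff_eq_negResidues {κ : ℕ} (b : List (ZMod κ)) (ν : List ℤ) :
    Forall₂ (fun (bi : ZMod κ) (νi : ℤ) => bi = -(νi : ZMod κ)) b ν ↔ b = negResidues κ ν := by
  rw [negResidues, ← forall₂_map_right_iff, forall₂_eq_eq_eq]

lemma negResidues_eq_iff {κ : ℕ} {ν μ : List ℤ} :
    negResidues κ ν = negResidues κ μ ↔ Forall₂ (· ≡ · [ZMOD κ]) ν μ := by
  simp only [negResidues, ← forall₂_eq_eq_eq, forall₂_map_left_iff, forall₂_map_right_iff,
    neg_inj, ZMod.intCast_eq_intCast_iff]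

lemma sum_negResidues_eq_zero_iff {κ : ℕ} {ν : List ℤ} :
    (negResidues κ ν).sum = 0 ↔ (κ : ℤ) ∣ ν.sum := by
  have : (negResidues κ ν).sum = -(ν.sum : ZMod κ) := by
    simp [negResidues, Int.cast_list_sum, List.sum_neg, Function.comp_def]
  rw [this, neg_eq_zero, ZMod.intCast_zmod_eq_zero_iff_dvd]

lemma negResidues_ne_zero_iff {κ : ℕ} (hκ : 0 < κ) {ν : List ℤ} (hν : ν ∈ signedCompositions κ) :
    (∀ z ∈ negResidues κ ν, z ≠ 0) ↔ 2 ≤ ν.length := by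
  simp only [negResidues, mem_map, ne_eq, neg_eq_zero, ZMod.intCast_zmod_eq_zero_iff_dvd,
    forall_exists_index, and_imp, forall_apply_eq_imp_iff₂]
  constructor
  · intro h
    obtain ⟨-, hνs⟩ := hν
    rcases ν with _ | ⟨x, _ | ⟨y, t⟩⟩
    · simp at hνs; omega
    · simp only [absSum_cons, absSum_nil, add_zero] at hνs
      exact absurd ((dvd_abs _ _).1 (by rw [hνs])) (h x (by simp))
    · simp
  · intro hlen x hx hdvd
    exact hν.1 x hx (Int.eq_zero_of_abs_lt_dvd hdvd (abs_lt_of_mem_signedCompositions hν hlen hx))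

def admissible (κ : ℕ) : Set (List ℤ) :=
  {ν | ν ∈ signedCompositions κ ∧ 2 ≤ ν.length ∧ (κ : ℤ) ∣ ν.sum}

theorem eq_image_admissible {κ : ℕ} (hκ : 0 < κ) : Bset κ = negResidues κ '' admissible κ := by
  ext b
  simp only [Bset, forall₂_iff_eq_negResidues, Set.mem_ofPred_eq, Set.mem_image, admissible]
  constructor
  · rintro ⟨hb0, hbs, ν, hν0, hνs, rfl⟩
    have hν : ν ∈ signedCompositions κ := ⟨hν0, hνs⟩
    exact ⟨ν, ⟨hν, (negResidues_ne_zero_iff hκ hν).1 hb0, sum_negResidues_eq_zero_iff.1 hbs⟩, rfl⟩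
  · rintro ⟨ν, ⟨hν, hlen, hdvd⟩, rfl⟩
    exact ⟨(negResidues_ne_zero_iff hκ hν).2 hlen, sum_negResidues_eq_zero_iff.2 hdvd,
      ν, hν.1, hν.2, rfl⟩

lemma sum_eq_of_mem_admissible {κ : ℕ} {ν : List ℤ} (hν : ν ∈ admissible κ) :
    ν.sum = 0 ∨ ν.sum = κ ∨ ν.sum = -κ := by
  obtain ⟨⟨-, hνs⟩, -, c, hc⟩ := hν
  have hle := abs_sum_le_absSum ν
  rw [hνs, hc, abs_mul, Nat.abs_cast] at hle
  rcases (κ.zero_le).eq_or_lt with hκ | hκ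
  · simp [← hκ] at hc; simp [hc]
  have hc1 : |c| ≤ 1 := le_of_mul_le_mul_left (by simpa using hle) (by exact_mod_cast hκ)
  rcases abs_le.1 hc1 with ⟨h1, h2⟩
  interval_cases c <;> simp [hc]

lemma negResidues_flip {κ : ℕ} (p s : List ℤ) {x : ℤ} (hx : 2 * |x| = κ) :
    negResidues κ (p ++ -x :: s) = negResidues κ (p ++ x :: s) := by
  have h2x : ((2 * x : ℤ) : ZMod κ) = 0 := by
    rw [ZMod.intCast_zmod_eq_zero_iff_dvd, ← dvd_abs, abs_mul, abs_two, hx]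
  simp only [negResidues, map_append, map_cons, Int.cast_neg, neg_neg, append_cancel_left_eq,
    cons.injEq, and_true]
  push_cast at h2x
  linear_combination h2x

lemma flip_mem_V0 {κ : ℕ} {p s : List ℤ} {x : ℤ} (h : p ++ x :: s ∈ signedCompositions κ)
    (hsum : (p ++ x :: s).sum = 2 * x) : p ++ -x :: s ∈ V0 κ := by
  obtain ⟨h0, habs⟩ := h
  refine ⟨?_, ?_, ?_⟩
  · simp only [mem_append, mem_cons] at h0 ⊢
    rintro y (hy | rfl | hy)
    · exact h0 y (.inl hy)
    · exact neg_ne_zero.2 (h0 x (.inr (.inl rfl)))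
    · exact h0 y (.inr (.inr hy))
  · simpa [absSum] using habs
  · simp only [sum_append, sum_cons] at hsum ⊢
    linarith

lemma map_neg_mem_admissible {κ : ℕ} {ν : List ℤ} (h : ν ∈ admissible κ) :
    ν.map Neg.neg ∈ admissible κ := by
  obtain ⟨⟨h0, habs⟩, hlen, hdvd⟩ := h
  exact ⟨⟨by simpa using fun x hx => h0 (-x) hx, by rwa [absSum_map_neg]⟩, by simpa using hlen,
    by rw [← sum_neg]; exact dvd_neg.2 hdvd⟩

section Even

variable {u : ℕ}

lemma Vtilde_subset_admissible : Vtilde u ⊆ admissible (2 * u) := by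
  rintro ν ⟨hpos, -, hlen, hsum⟩
  refine ⟨⟨fun x hx => (hpos x hx).ne', ?_⟩, hlen, ?_⟩ <;> simp [absSum_eq_sum hpos, hsum]

/-- Modulo `2u`, an entry `±u` of an admissible list of length at least three may be replaced by
`∓u`, the pair `[a, 2u - a]` agrees with `[a - 2u, -a]`, and `[u, -u]`, `[-u, u]` agree with
`[u, u]`; one list is kept from each class. -/
def reps (u : ℕ) : Set (List ℤ) :=
  V0 (2 * u) ∩ {ν | 3 ≤ ν.length} ∪ Vtilde u ∪ map Neg.neg '' (Vtilde u ∩ {ν | 3 ≤ ν.length}) ∪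
    {[(u : ℤ), u]}

lemma reps_subset_admissible (hu : 1 ≤ u) : reps u ⊆ admissible (2 * u) := by
  rintro ν (((⟨⟨h0, habs, hsum⟩, hlen⟩ | hν) | ⟨μ, ⟨hμ, -⟩, rfl⟩) | rfl)
  · exact ⟨⟨h0, habs⟩, by simp only [Set.mem_ofPred_eq] at hlen; omega, by simp [hsum]⟩
  · exact Vtilde_subset_admissible hν
  · exact map_neg_mem_admissible (Vtilde_subset_admissible hμ)
  · refine ⟨⟨by simp; omega, by simp; ring⟩, by simp, by simp [← two_mul]⟩

lemma pair_mem_reps {a : ℤ} (ha : 0 < a) (ha' : a < 2 * u) : [a, 2 * u - a] ∈ reps u := by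
  by_cases hau : a = u
  · right
    simp only [Set.mem_singleton_iff, cons.injEq, and_true]
    omega
  · left; left; right
    refine ⟨?_, ?_, by simp, by simp⟩ <;> simp <;> omega

lemma exists_mem_reps_of_length_eq_two {ν : List ℤ} (hν : ν ∈ admissible (2 * u))
    (hlen : ν.length = 2) : ∃ c ∈ reps u, negResidues (2 * u) c = negResidues (2 * u) ν := by
  obtain ⟨x, y, rfl⟩ := length_eq_two.1 hlen
  obtain ⟨hsc, -, hdvd⟩ := hν
  have hx0 : x ≠ 0 := hsc.1 x (by simp)
  have hxκ := abs_lt_of_mem_signedCompositions hsc (by simp) (x := x) (by simp)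
  push_cast at hxκ hdvd
  have hκ : (0 : ℤ) < 2 * u := by linarith [abs_nonneg x]
  set a := x % (2 * u : ℤ)
  have ha : a ≠ 0 := fun h => hx0 (Int.eq_zero_of_abs_lt_dvd (Int.dvd_of_emod_eq_zero h) hxκ)
  refine ⟨_, pair_mem_reps (lt_of_le_of_ne (Int.emod_nonneg _ hκ.ne') ha.symm)
    (Int.emod_lt_of_pos _ hκ), negResidues_eq_iff.2 ?_⟩
  have hxa : (2 * u : ℤ) ∣ x - a := (Int.mod_modEq x _).dvd
  simp only [forall₂_cons, Forall₂.nil, and_true]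
  push_cast
  refine ⟨Int.mod_modEq x _, Int.modEq_iff_dvd.2 ?_⟩
  have : y - (2 * u - a) = [x, y].sum - (x - a) - 2 * u := by simp; ring
  rw [this]
  exact dvd_sub (dvd_sub hdvd hxa) dvd_rfl

lemma exists_mem_reps_of_three_le_length {ν : List ℤ} (hν : ν ∈ admissible (2 * u))
    (hlen : 3 ≤ ν.length) : ∃ c ∈ reps u, negResidues (2 * u) c = negResidues (2 * u) ν := by
  rcases sum_eq_of_mem_admissible hν with hsum | hsum | hsum <;> push_cast at hsum
  · exact ⟨ν, .inl (.inl (.inl ⟨⟨hν.1.1, hν.1.2, hsum⟩, hlen⟩)), rfl⟩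
  · have hpos := pos_of_absSum_eq_sum hν.1.1 (by rw [hν.1.2, hsum]; push_cast; rfl)
    by_cases hmem : (u : ℤ) ∈ ν
    · obtain ⟨p, s, rfl⟩ := append_of_mem hmem
      refine ⟨p ++ -(u : ℤ) :: s, .inl (.inl (.inl ⟨flip_mem_V0 hν.1 hsum, by simpa using hlen⟩)),
        negResidues_flip p s (by push_cast; simp)⟩
    · exact ⟨ν, .inl (.inl (.inr ⟨hpos, fun x hx he => hmem (he ▸ hx), hν.2.1, hsum⟩)), rfl⟩
  · by_cases hmem : -(u : ℤ) ∈ ν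
    · obtain ⟨p, s, rfl⟩ := append_of_mem hmem
      have hflip := flip_mem_V0 hν.1 (by rw [hsum]; ring)
      rw [neg_neg] at hflip
      refine ⟨p ++ (u : ℤ) :: s, .inl (.inl (.inl ⟨hflip, by simpa using hlen⟩)), ?_⟩
      simpa using negResidues_flip (κ := 2 * u) p s (x := -(u : ℤ)) (by push_cast; simp)
    · have hneg := map_neg_mem_admissible hν
      have hpos := pos_of_absSum_eq_sum hneg.1.1
        (by rw [hneg.1.2, ← sum_neg, hsum]; push_cast; ring)
      refine ⟨ν, .inl (.inr ⟨ν.map Neg.neg, ⟨⟨hpos, ?_, hneg.2.1, ?_⟩, by simpa using hlen⟩, ?_⟩),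
        rfl⟩
      · simp only [mem_map]
        rintro _ ⟨x, hx, rfl⟩ he
        exact hmem (by rwa [← neg_eq_iff_eq_neg.1 he])
      · rw [← sum_neg, hsum, neg_neg]
      · simp [map_map]

lemma pos_of_mem_reps_of_length_lt (hu : 1 ≤ u) {c : List ℤ} (hc : c ∈ reps u)
    (hlen : c.length < 3) : ∀ x ∈ c, 0 < x := by
  rcases hc with ((⟨-, hlen'⟩ | hc) | ⟨μ, ⟨-, hlen'⟩, rfl⟩) | rfl
  · exact absurd hlen' (by simpa using hlen)
  · exact hc.1
  · exact absurd hlen' (by simpa using hlen)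
  · simp; omega

lemma sum_eq_zero_of_mem_reps {c : List ℤ} (hc : c ∈ reps u) (hlen : 3 ≤ c.length) {x : ℤ}
    (hx : x ∈ c) (habs : |x| = u) : c.sum = 0 := by
  rcases hc with ((⟨hc, -⟩ | hc) | ⟨μ, ⟨hμ, -⟩, rfl⟩) | rfl
  · exact hc.2.2
  · exact absurd (by rwa [abs_of_pos (hc.1 x hx)] at habs) (hc.2.1 x hx)
  · obtain ⟨y, hy, rfl⟩ := mem_map.1 hx
    exact absurd (by rwa [abs_neg, abs_of_pos (hμ.1 y hy)] at habs) (hμ.2.1 y hy)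
  · simp at hlen

theorem injOn_negResidues_reps (hu : 1 ≤ u) : Set.InjOn (negResidues (2 * u)) (reps u) := by
  intro c hc c' hc' h
  rw [negResidues_eq_iff] at h
  obtain ⟨hsc, hlen, -⟩ := reps_subset_admissible hu hc
  obtain ⟨hsc', -, -⟩ := reps_subset_admissible hu hc'
  by_cases hlen3 : 3 ≤ c.length
  · rcases eq_or_flip_of_forall₂_modEq hsc hsc' hlen3 h with rfl | ⟨p, s, x, hx, rfl, rfl⟩
    · rfl
    push_cast at hx
    have h₁ := sum_eq_zero_of_mem_reps hc hlen3 (x := x) (by simp) (by omega)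
    have h₂ := sum_eq_zero_of_mem_reps hc' (by simpa using hlen3) (x := -x) (by simp)
      (by rw [abs_neg]; omega)
    simp only [sum_append, sum_cons] at h₁ h₂
    have : x = 0 := by omega
    simp [this] at hx
    omega
  · have hbound {d : List ℤ} (hd : d ∈ reps u) (hdsc : d ∈ signedCompositions (2 * u))
        (hdlen : d.length = c.length) (x : ℤ) (hx : x ∈ d) : 0 ≤ x ∧ x < (2 * u : ℕ) :=
      ⟨(pos_of_mem_reps_of_length_lt hu hd (by omega) x hx).le,
        lt_of_le_of_lt (le_abs_self x) (abs_lt_of_mem_signedCompositions hdsc (by omega) hx)⟩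
    exact eq_of_forall₂_modEq h (hbound hc hsc rfl) (hbound hc' hsc' h.length_eq.symm)

lemma V0_sdiff_three_le_length (hu : 1 ≤ u) :
    V0 (2 * u) \ {ν | 3 ≤ ν.length} = {[(u : ℤ), -u], [-(u : ℤ), u]} := by
  ext ν
  simp only [V0, Set.mem_sdiff, Set.mem_ofPred_eq, Set.mem_insert_iff, Set.mem_singleton_iff]
  constructor
  · rintro ⟨⟨h0, habs, hsum⟩, hlen⟩
    rcases ν with _ | ⟨x, _ | ⟨y, _ | ⟨z, t⟩⟩⟩
    · simp at habs; omega
    · simp at hsum h0; exact absurd hsum h0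
    · simp only [map_cons, map_nil, sum_cons, sum_nil, add_zero, Nat.cast_mul,
        Nat.cast_ofNat] at habs hsum
      simp only [cons.injEq, and_true]
      rcases abs_cases x with ⟨hx, _⟩ | ⟨hx, _⟩ <;> rcases abs_cases y with ⟨hy, _⟩ | ⟨hy, _⟩ <;>
        omega
    · simp at hlen
  · rintro (rfl | rfl) <;> refine ⟨⟨?_, ?_, by simp⟩, by simp⟩ <;> simp <;> omega

lemma Vtilde_sdiff_three_le_length :
    Vtilde u \ {ν | 3 ≤ ν.length} =
      (fun a : ℤ => [a, 2 * u - a]) '' ↑((Finset.Ioo 0 (2 * (u : ℤ))).erase u) := by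
  ext ν
  simp only [Vtilde, Set.mem_sdiff, Set.mem_ofPred_eq, Set.mem_image, Finset.coe_erase,
    Finset.coe_Ioo, Set.mem_Ioo, Set.mem_singleton_iff]
  constructor
  · rintro ⟨⟨hpos, hne, hlen, hsum⟩, hlen'⟩
    obtain ⟨x, y, rfl⟩ := (length_eq_two (l := ν)).1 (by omega)
    simp only [mem_cons, not_mem_nil, or_false, forall_eq_or_imp, forall_eq, sum_cons,
      sum_nil, add_zero] at hpos hne hsum
    obtain ⟨⟨hx, hy⟩, hxu, -⟩ := And.intro hpos hne
    exact ⟨x, ⟨⟨hx, by omega⟩, hxu⟩, by simp [← hsum]⟩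
  · rintro ⟨a, ⟨⟨ha0, ha⟩, hau⟩, rfl⟩
    refine ⟨⟨?_, ?_, by simp, by simp⟩, by simp⟩ <;> simp <;> omega

lemma ncard_V0_inter_three_le_length (hu : 1 ≤ u) :
    (V0 (2 * u) ∩ {ν | 3 ≤ ν.length}).ncard + 2 = (V0 (2 * u)).ncard := by
  have hfin := (finite_signedCompositions (2 * u)).subset fun ν (h : ν ∈ V0 _) => ⟨h.1, h.2.1⟩
  rw [← Set.ncard_inter_add_ncard_sdiff_eq_ncard _ {ν | 3 ≤ ν.length} hfin,
    V0_sdiff_three_le_length hu, Set.ncard_pair (by simp; omega)]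

lemma ncard_Vtilde_inter_three_le_length (hu : 1 ≤ u) :
    (Vtilde u ∩ {ν | 3 ≤ ν.length}).ncard + (2 * u - 2) = (Vtilde u).ncard := by
  have hfin := (finite_signedCompositions (2 * u)).subset fun ν h => (Vtilde_subset_admissible h).1
  rw [← Set.ncard_inter_add_ncard_sdiff_eq_ncard _ {ν | 3 ≤ ν.length} hfin,
    Vtilde_sdiff_three_le_length, Set.ncard_image_of_injective _ fun a b h => by simpa using h,
    Set.ncard_coe_finset, Finset.card_erase_of_mem (by simp; omega), Int.card_Ioo]
  omega

lemma ncard_reps (hu : 1 ≤ u) :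
    (reps u).ncard = (V0 (2 * u) ∩ {ν | 3 ≤ ν.length}).ncard + (Vtilde u).ncard +
      (Vtilde u ∩ {ν | 3 ≤ ν.length}).ncard + 1 := by
  have hfin : (reps u).Finite :=
    (finite_signedCompositions _).subset fun ν h => (reps_subset_admissible hu h).1
  have hAB : Disjoint (V0 (2 * u) ∩ {ν | 3 ≤ ν.length}) (Vtilde u) :=
    Set.disjoint_left.2 fun ν h h' => by have := h.1.2.2; have := h'.2.2.2; omega
  have hABC : Disjoint (V0 (2 * u) ∩ {ν | 3 ≤ ν.length} ∪ Vtilde u)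
      (map Neg.neg '' (Vtilde u ∩ {ν | 3 ≤ ν.length})) := by
    refine Set.disjoint_left.2 fun ν h ⟨μ, ⟨hμ, _⟩, hν⟩ => ?_
    have hsum : ν.sum = -(2 * u) := by rw [← hν, ← sum_neg, hμ.2.2.2]
    rcases h with h | h
    · have := h.1.2.2; omega
    · have := h.2.2.2; omega
  have hD : [(u : ℤ), u] ∉ V0 (2 * u) ∩ {ν | 3 ≤ ν.length} ∪ Vtilde u ∪
      map Neg.neg '' (Vtilde u ∩ {ν | 3 ≤ ν.length}) := by
    rintro ((⟨-, hlen⟩ | h) | ⟨μ, ⟨-, hlen⟩, hμ⟩)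
    · simp at hlen
    · exact h.2.1 u (by simp) rfl
    · have := congrArg length hμ
      simp only [length_map, length_cons, length_nil] at this
      simp only [Set.mem_ofPred_eq] at hlen
      omega
  rw [reps, Set.ncard_union_eq (Set.disjoint_singleton_right.2 hD)
      (hfin.subset Set.subset_union_left), Set.ncard_singleton,
    Set.ncard_union_eq hABC (hfin.subset (by intro; simp only [reps, Set.mem_union]; tauto))
      (hfin.subset (by intro; simp only [reps, Set.mem_union]; tauto)),
    Set.ncard_union_eq hAB (hfin.subset (by intro; simp only [reps, Set.mem_union]; tauto))
      (hfin.subset (by intro; simp only [reps, Set.mem_union]; tauto)),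
    Set.ncard_image_of_injective _ (map_injective_iff.2 neg_injective)]

end Even

end Bset

/-- For u ≥ 1, |B_{2u}| = |V⁰_{2u}| + 2|Ṽ⁺_{2u}| - 2u + 1. -/
theorem card_Bset_even (u : ℕ) (hu : 1 ≤ u) :
    (Set.ncard (Bset (2 * u)) : ℤ)
      = (Set.ncard (V0 (2 * u)) : ℤ) + 2 * (Set.ncard (Vtilde u) : ℤ)
        - 2 * (u : ℤ) + 1 := by
  have himage : Bset (2 * u) = Bset.negResidues (2 * u) '' Bset.reps u := by
    rw [Bset.eq_image_admissible (by omega)]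
    refine (Set.image_mono (Bset.reps_subset_admissible hu)).antisymm' ?_
    rintro _ ⟨ν, hν, rfl⟩
    rcases (hν.2.1).eq_or_lt with hlen | hlen
    · exact Bset.exists_mem_reps_of_length_eq_two hν hlen.symm
    · exact Bset.exists_mem_reps_of_three_le_length hν hlen
  rw [himage, (Bset.injOn_negResidues_reps hu).ncard_image, Bset.ncard_reps hu]
  have hV0 := Bset.ncard_V0_inter_three_le_length hu
  have hVt := Bset.ncard_Vtilde_inter_three_le_length hu
  omega
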